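/- arXiv:2102.01685 — 2 statements merged into one kernel-verified Lean document; each statement's English description precedes it below -/
import Mathlib

section
/- In a single-decision structural causal influence model, if the decision D is not an ancestor of a variable X, then for every policy π and every intervention value d, the potential response X_d equals X on every exogenous setting; consequently the nested counterfactual U_{X_d} equals U pointwise, so there is no instrumental control incentive on X. -/
attribute [local instance] Classical.propDecidable

noncomputable section

/-- Acyclicity of a directed graph. -/
def Acyclic {V : Type} (E : V → V → Prop) : Prop := ∀ v, ¬ Relation.TransGen E v v

/-- A walk in the digraph: a nonempty list of vertices where consecutive
vertices are joined by an edge in some direction. -/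
def IsWalk {V : Type} (E : V → V → Prop) (p : List V) : Prop :=
  p ≠ [] ∧ p.Chain' (fun a b => E a b ∨ E b a)

/-- A consecutive triple `a, b, c` blocks a path w.r.t. `S` if `b` is a collider
with no descendant (including itself) in `S`, or a non-collider in `S`. -/
def BlockedTriple {V : Type} (E : V → V → Prop) (S : Set V) (a b c : V) : Prop :=
  (E a b ∧ E c b ∧ ∀ w, Relation.ReflTransGen E b w → w ∉ S) ∨
  (¬ (E a b ∧ E c b) ∧ b ∈ S)

/-- A path is d-separated (blocked) by `S`. -/
def BlocksPath {V : Type} (E : V → V → Prop) (S : Set V) (p : List V) : Prop :=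
  (∃ x, p.head? = some x ∧ x ∈ S) ∨ (∃ x, p.getLast? = some x ∧ x ∈ S) ∨
  (∃ l a b c r, p = l ++ a :: b :: c :: r ∧ BlockedTriple E S a b c)

/-- `A` is d-separated from `B` given `S`. -/
def DSep {V : Type} (E : V → V → Prop) (A B S : Set V) : Prop :=
  ∀ p : List V, IsWalk E p → (∃ a ∈ A, p.head? = some a) →
    (∃ b ∈ B, p.getLast? = some b) → BlocksPath E S p

/-- An observation `X ∈ Pa_D` is requisite in the graph `E` with decision `D` and
utility nodes `U` if it is d-connected to the downstream utilities `U ∩ Desc(D)`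
given the other observations and the decision, `(Pa_D ∪ {D}) \ {X}`. -/
def RequisiteG {V : Type} (E : V → V → Prop) (D : V) (U : Set V) (X : V) : Prop :=
  E X D ∧ ¬ DSep E {X} {u | u ∈ U ∧ Relation.ReflTransGen E D u}
      {v | (E v D ∧ v ≠ X) ∨ v = D}

/-- The edge relation of the minimal reduction: all information links from
nonrequisite observations are removed. -/
def ReducedEdge {V : Type} (E : V → V → Prop) (D : V) (U : Set V) : V → V → Prop :=
  fun a b => E a b ∧ (b = D → RequisiteG E D U a)

variable {V : Type} [Fintype V] [DecidableEq V]

/-- A single-decision structural causal influence model (SCIM): a causal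
influence diagram (DAG with a decision node `D` and childless utility nodes
`Util` whose values are interpreted in `ℝ` via `utilReal`), finite nonempty
domains, structural functions for all non-decision nodes depending only on
parents, and mutually independent finitely-supported exogenous variables. -/
structure SCIM (V : Type) [Fintype V] [DecidableEq V] where
  Edge : V → V → Prop
  acyclic : Acyclic Edge
  D : V
  Util : Finset V
  utilNotD : D ∉ Util
  utilNoChild : ∀ u ∈ Util, ∀ v, ¬ Edge u v
  Dom : V → Type
  domFin : ∀ v, Fintype (Dom v)
  domNE : ∀ v, Nonempty (Dom v)
  utilReal : (u : V) → Dom u → ℝ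
  ExoDom : V → Type
  exoFin : ∀ v, Fintype (ExoDom v)
  exoNE : ∀ v, Nonempty (ExoDom v)
  f : (v : V) → ((p : V) → Dom p) → ExoDom v → Dom v
  localDep : ∀ v a a' e, (∀ p, Edge p v → a p = a' p) → f v a e = f v a' e
  P : (v : V) → ExoDom v → ℝ
  Pnonneg : ∀ v e, 0 ≤ P v e
  Psum : ∀ v, ∑ e ∈ (exoFin v).elems, P v e = 1

namespace SCIM

variable (M : SCIM V)

/-- Joint (product) probability of an exogenous setting. -/
def Pjoint (ε : ∀ v, M.ExoDom v) : ℝ := ∏ v, M.P v (ε v)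

/-- All exogenous settings. -/
def exoElems : Finset (∀ v, M.ExoDom v) :=
  letI := M.exoFin; Finset.univ

/-- A default assignment of values. -/
def dflt : ∀ v, M.Dom v := fun v => (M.domNE v).some

/-- `a` solves the system of structural equations `g` at exogenous setting `ε`. -/
def Solves (g : (v : V) → ((p : V) → M.Dom p) → M.ExoDom v → M.Dom v)
    (ε : ∀ v, M.ExoDom v) (a : ∀ v, M.Dom v) : Prop :=
  ∀ v, a v = g v a (ε v)

/-- The (unique, by acyclicity) solution of the structural equations `g`
at `ε`: the values of all endogenous variables obtained by recursive
application of the structural functions. -/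
def sol (g : (v : V) → ((p : V) → M.Dom p) → M.ExoDom v → M.Dom v)
    (ε : ∀ v, M.ExoDom v) : ∀ v, M.Dom v :=
  if h : ∃ a, M.Solves g ε a then h.choose else M.dflt

/-- Replace the structural function at node `X` by `gX` (a soft intervention). -/
def replaceAt (g : (v : V) → ((p : V) → M.Dom p) → M.ExoDom v → M.Dom v) (X : V)
    (gX : ((p : V) → M.Dom p) → M.ExoDom X → M.Dom X) :
    (v : V) → ((p : V) → M.Dom p) → M.ExoDom v → M.Dom v :=
  fun v => if h : v = X then (by subst h; exact gX) else g v

/-- Hard intervention do(`X` = `x`): constant functions on `X`. -/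
def doSet (g : (v : V) → ((p : V) → M.Dom p) → M.ExoDom v → M.Dom v)
    (X : Set V) (x : ∀ v, M.Dom v) :
    (v : V) → ((p : V) → M.Dom p) → M.ExoDom v → M.Dom v :=
  fun v => if v ∈ X then fun _ _ => x v else g v

/-- A policy: a structural function for `D` that depends only on the
observations `Pa_D` (and the exogenous variable of `D`). -/
def IsPolicy (π : ((p : V) → M.Dom p) → M.ExoDom M.D → M.Dom M.D) : Prop :=
  ∀ a a' e, (∀ p, M.Edge p M.D → a p = a' p) → π a e = π a' e

/-- The policy-completed system of structural functions. -/
def gpol (π : ((p : V) → M.Dom p) → M.ExoDom M.D → M.Dom M.D) :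
    (v : V) → ((p : V) → M.Dom p) → M.ExoDom v → M.Dom v :=
  M.replaceAt M.f M.D π

/-- Total utility of an assignment: the sum of the utility-node values. -/
def TotalU (a : ∀ v, M.Dom v) : ℝ := ∑ u ∈ M.Util, M.utilReal u (a u)

/-- Expected total utility of a system of structural equations `g`. -/
def EUg (g : (v : V) → ((p : V) → M.Dom p) → M.ExoDom v → M.Dom v) : ℝ :=
  ∑ ε ∈ M.exoElems, M.Pjoint ε * M.TotalU (M.sol g ε)

/-- Expected total utility of a policy. -/
def EU (π : ((p : V) → M.Dom p) → M.ExoDom M.D → M.Dom M.D) : ℝ :=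
  M.EUg (M.gpol π)

/-- An optimal policy maximizes expected total utility. -/
def IsOptimal (π : ((p : V) → M.Dom p) → M.ExoDom M.D → M.Dom M.D) : Prop :=
  M.IsPolicy π ∧ ∀ π', M.IsPolicy π' → M.EU π' ≤ M.EU π

/-- Probability of an event over exogenous settings. -/
def PrEv (Ev : (∀ v, M.ExoDom v) → Prop) : ℝ :=
  ∑ ε ∈ M.exoElems, if Ev ε then M.Pjoint ε else 0

/-- Conditional expectation of `h` given the event `Ev`. -/
def condExp (h : (∀ v, M.ExoDom v) → ℝ) (Ev : (∀ v, M.ExoDom v) → Prop) : ℝ :=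
  (∑ ε ∈ M.exoElems, if Ev ε then M.Pjoint ε * h ε else 0) / M.PrEv Ev

/-- Conditional probability of `h` given `Ev`. -/
def condProb (h Ev : (∀ v, M.ExoDom v) → Prop) : ℝ :=
  M.PrEv (fun ε => h ε ∧ Ev ε) / M.PrEv Ev

/-- The event that the decision context (the observations `Pa_D`) takes the
values `pa`, under policy `π`. -/
def CtxEvent (π : ((p : V) → M.Dom p) → M.ExoDom M.D → M.Dom M.D)
    (pa : ∀ v, M.Dom v) (ε : ∀ v, M.ExoDom v) : Prop :=
  ∀ p, M.Edge p M.D → M.sol (M.gpol π) ε p = pa p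

/-- The potential response under the hard intervention do(`X` = `x`),
in the policy-completed model: an assignment to all variables. -/
def response (π : ((p : V) → M.Dom p) → M.ExoDom M.D → M.Dom M.D)
    (X : V) (x : M.Dom X) (ε : ∀ v, M.ExoDom v) : ∀ v, M.Dom v :=
  M.sol (M.doSet (M.gpol π) {X} (Function.update M.dflt X x)) ε

/-- The nested-counterfactual assignment realizing `U_{X_d}`: intervene on `X`
with the value `X_d(ε)` it would take under do(`D` = `d`). -/
def nestedSol (π : ((p : V) → M.Dom p) → M.ExoDom M.D → M.Dom M.D)
    (X : V) (d : M.Dom M.D) (ε : ∀ v, M.ExoDom v) : ∀ v, M.Dom v :=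
  M.response π X (M.response π M.D d ε X) ε

/-- Instrumental control incentive on `X`: in some decision context `pa`
(of positive probability), every optimal policy has
`E[U_{X_d} | pa] ≠ E[U | pa]` for some `d`. -/
def HasICI (X : V) : Prop :=
  ∃ pa : ∀ v, M.Dom v, ∀ π, M.IsOptimal π →
    0 < M.PrEv (M.CtxEvent π pa) ∧
    ∃ d : M.Dom M.D,
      M.condExp (fun ε => M.TotalU (M.nestedSol π X d ε)) (M.CtxEvent π pa) ≠
      M.condExp (fun ε => M.TotalU (M.sol (M.gpol π) ε)) (M.CtxEvent π pa)

/-- A policy that does not use the information link `X → D`. -/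
def IsPolicyWithout (X : V)
    (π : ((p : V) → M.Dom p) → M.ExoDom M.D → M.Dom M.D) : Prop :=
  M.IsPolicy π ∧ ∀ a a' e, (∀ p, M.Edge p M.D → p ≠ X → a p = a' p) → π a e = π a' e

/-- Counterfactual fairness of policy `π` w.r.t. sensitive attribute `A`:
`Pr(D_{a'} = d | pa_D, a) = Pr(D = d | pa_D, a)` for all `d`, contexts `pa_D`,
and attribute values `a, a'` with positive probability of the conditioning event. -/
def CFair (π : ((p : V) → M.Dom p) → M.ExoDom M.D → M.Dom M.D) (A : V) : Prop :=
  ∀ (d : M.Dom M.D) (pa : ∀ v, M.Dom v) (a a' : M.Dom A),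
    0 < M.PrEv (fun ε => M.CtxEvent π pa ε ∧ M.sol (M.gpol π) ε A = a) →
    M.condProb (fun ε => M.response π A a' ε M.D = d)
        (fun ε => M.CtxEvent π pa ε ∧ M.sol (M.gpol π) ε A = a) =
    M.condProb (fun ε => M.sol (M.gpol π) ε M.D = d)
        (fun ε => M.CtxEvent π pa ε ∧ M.sol (M.gpol π) ε A = a)

end SCIM

/-!
Since the graph is acyclic and every structural function depends only on the parents of its node,
the structural equations have a unique solution, and its restriction to an ancestrally closed set
of nodes is determined by the equations on that set. The ancestors of `X` form such a set, and
when `D` is not among them do(`D` = `d`) leaves all their equations unchanged, so `X_d = X`.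
Intervening on `X` with its factual value keeps the factual solution a solution, so by
uniqueness `U_{X_d} = U` pointwise; the two conditional expectations in the definition of an
instrumental control incentive then agree for every policy, in particular for an optimal one,
which exists because there are only finitely many policies.
-/

theorem Acyclic.wellFounded {α : Type} [Finite α] {E : α → α → Prop} (h : Acyclic E) :
    WellFounded E := by
  have : IsTrans α (Relation.TransGen E) := ⟨fun _ _ _ => Relation.TransGen.trans⟩
  have : Std.Irrefl (Relation.TransGen E) := ⟨h⟩
  exact Subrelation.wf Relation.TransGen.single
    (Finite.wellFounded_of_trans_of_irrefl (Relation.TransGen E))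

namespace SCIM

variable (M : SCIM V)

def IsLocal (g : (v : V) → ((p : V) → M.Dom p) → M.ExoDom v → M.Dom v) : Prop :=
  ∀ v a a' e, (∀ p, M.Edge p v → a p = a' p) → g v a e = g v a' e

variable {M}
variable {g g' : (v : V) → ((p : V) → M.Dom p) → M.ExoDom v → M.Dom v}

theorem isLocal_gpol {π : ((p : V) → M.Dom p) → M.ExoDom M.D → M.Dom M.D}
    (hπ : M.IsPolicy π) : M.IsLocal (M.gpol π) := by
  intro v a a' e h
  by_cases hv : v = M.D
  · subst hv
    simpa only [gpol, replaceAt, dif_pos] using hπ a a' e h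
  · simpa only [gpol, replaceAt, dif_neg hv] using M.localDep v a a' e h

theorem IsLocal.doSet (hg : M.IsLocal g) (S : Set V) (x : ∀ v, M.Dom v) :
    M.IsLocal (M.doSet g S x) := by
  intro v a a' e h
  by_cases hv : v ∈ S
  · simp only [SCIM.doSet, hv, if_true]
  · simpa only [SCIM.doSet, hv, if_false] using hg v a a' e h

theorem exists_solves (hg : M.IsLocal g) (ε : ∀ v, M.ExoDom v) : ∃ a, M.Solves g ε a := by
  let a : ∀ v, M.Dom v := M.acyclic.wellFounded.fix
    (fun v ih => g v (fun p => if h : M.Edge p v then ih p h else M.dflt p) (ε v))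
  refine ⟨a, fun v => ?_⟩
  rw [show a v = _ from M.acyclic.wellFounded.fix_eq _ v]
  exact hg v _ _ (ε v) fun p hp => by simp only [hp, dif_pos, a]

theorem solves_unique (hg : M.IsLocal g) {ε : ∀ v, M.ExoDom v} {a b : ∀ v, M.Dom v}
    (ha : M.Solves g ε a) (hb : M.Solves g ε b) : a = b := by
  funext v
  induction v using M.acyclic.wellFounded.induction with
  | _ v ih => rw [ha v, hb v]; exact hg v a b (ε v) ih

theorem sol_solves (hg : M.IsLocal g) (ε : ∀ v, M.ExoDom v) : M.Solves g ε (M.sol g ε) := by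
  rw [sol, dif_pos (M.exists_solves hg ε)]
  exact (M.exists_solves hg ε).choose_spec

theorem sol_eq_of_solves (hg : M.IsLocal g) {ε : ∀ v, M.ExoDom v} {a : ∀ v, M.Dom v}
    (ha : M.Solves g ε a) : M.sol g ε = a :=
  solves_unique hg (sol_solves hg ε) ha

theorem sol_eq_of_ancestral (hg : M.IsLocal g) (hg' : M.IsLocal g') {S : Set V}
    (hS : ∀ v ∈ S, ∀ p, M.Edge p v → p ∈ S) (hgg' : ∀ v ∈ S, g v = g' v)
    (ε : ∀ v, M.ExoDom v) : ∀ v ∈ S, M.sol g ε v = M.sol g' ε v := by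
  intro v
  induction v using M.acyclic.wellFounded.induction with
  | _ v ih =>
    intro hv
    rw [sol_solves hg ε v, sol_solves hg' ε v, hgg' v hv]
    exact hg' v _ _ (ε v) fun p hp => ih p hp (hS v hv p hp)

theorem sol_doSet_of_not_reachable (hg : M.IsLocal g) {Y X : V}
    (hYX : ¬ Relation.ReflTransGen M.Edge Y X) (x : ∀ v, M.Dom v) (ε : ∀ v, M.ExoDom v) :
    M.sol (M.doSet g {Y} x) ε X = M.sol g ε X := by
  refine sol_eq_of_ancestral (hg.doSet _ _) hg (S := {v | Relation.ReflTransGen M.Edge v X})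
    (fun v hv p hp => Relation.ReflTransGen.head hp hv) (fun v hv => ?_) ε X .refl
  have hvY : v ∉ ({Y} : Set V) := fun h => hYX (Set.mem_singleton_iff.mp h ▸ hv)
  simp only [SCIM.doSet, hvY, if_false]

theorem sol_doSet_of_eq_sol (hg : M.IsLocal g) {X : V} {x : ∀ v, M.Dom v}
    {ε : ∀ v, M.ExoDom v} (hx : x X = M.sol g ε X) :
    M.sol (M.doSet g {X} x) ε = M.sol g ε := by
  refine sol_eq_of_solves (hg.doSet _ _) fun v => ?_
  by_cases hv : v = X
  · subst hv
    simp only [SCIM.doSet, Set.mem_singleton_iff, if_true, hx]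
  · simpa only [SCIM.doSet, Set.mem_singleton_iff, hv, if_false] using sol_solves hg ε v

theorem response_decision_eq_sol {π : ((p : V) → M.Dom p) → M.ExoDom M.D → M.Dom M.D}
    (hπ : M.IsPolicy π) {X : V} (hX : ¬ Relation.ReflTransGen M.Edge M.D X)
    (d : M.Dom M.D) (ε : ∀ v, M.ExoDom v) :
    M.response π M.D d ε X = M.sol (M.gpol π) ε X :=
  sol_doSet_of_not_reachable (isLocal_gpol hπ) hX _ ε

theorem nestedSol_eq_sol {π : ((p : V) → M.Dom p) → M.ExoDom M.D → M.Dom M.D}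
    (hπ : M.IsPolicy π) {X : V} (hX : ¬ Relation.ReflTransGen M.Edge M.D X)
    (d : M.Dom M.D) (ε : ∀ v, M.ExoDom v) :
    M.nestedSol π X d ε = M.sol (M.gpol π) ε :=
  sol_doSet_of_eq_sol (isLocal_gpol hπ) <| by
    rw [Function.update_self, response_decision_eq_sol hπ hX]

variable (M) in
theorem exists_isOptimal : ∃ π, M.IsOptimal π := by
  have := M.domFin; have := M.exoFin
  have hconst : M.IsPolicy fun _ _ => M.dflt M.D := fun _ _ _ _ => rfl
  obtain ⟨π, hπ, hmax⟩ := Finset.exists_max_image {π | M.IsPolicy π} M.EU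
    ⟨_, Finset.mem_filter.mpr ⟨Finset.mem_univ _, hconst⟩⟩
  exact ⟨π, (Finset.mem_filter.mp hπ).2,
    fun π' hπ' => hmax π' (Finset.mem_filter.mpr ⟨Finset.mem_univ _, hπ'⟩)⟩

end SCIM

/-- if the decision `D` is not an ancestor of `X`, then for every
policy `π` and decision value `d`, the potential response `X_d` equals `X` on every
exogenous setting; consequently the nested counterfactual `U_{X_d}` equals `U`
pointwise, and there is no instrumental control incentive on `X`. -/
theorem no_ici_of_not_descendant {V : Type} [Fintype V] [DecidableEq V]
    (M : SCIM V) (X : V) (hX : ¬ Relation.ReflTransGen M.Edge M.D X) :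
    (∀ π, M.IsPolicy π → ∀ (d : M.Dom M.D) (ε : ∀ v, M.ExoDom v),
      M.response π M.D d ε X = M.sol (M.gpol π) ε X ∧
      M.TotalU (M.nestedSol π X d ε) = M.TotalU (M.sol (M.gpol π) ε)) ∧
    ¬ M.HasICI X := by
  refine ⟨fun π hπ d ε =>
    ⟨SCIM.response_decision_eq_sol hπ hX d ε, by rw [SCIM.nestedSol_eq_sol hπ hX]⟩, ?_⟩
  rintro ⟨pa, hpa⟩
  obtain ⟨π, hopt⟩ := M.exists_isOptimal
  obtain ⟨-, d, hne⟩ := hpa π hopt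
  simp only [SCIM.nestedSol_eq_sol hopt.1 hX, ne_eq, not_true_eq_false] at hne
end
end

section
/- In a single-decision structural causal influence model with policy π, if no utility node is a descendant of X, then the sum of utilities U satisfies U_{X_d}(ε) = U(ε) for every exogenous setting ε and every decision value d, where U_{X_d} is the nested counterfactual setting X to the value it would take under do(D=d). -/
attribute [local instance] Classical.propDecidable

noncomputable section

variable {V : Type} [Fintype V] [DecidableEq V]

namespace SCIMAux
open SCIM

variable {V : Type} [Fintype V] [DecidableEq V] (M : SCIM V)

lemma wfTG : WellFounded (Relation.TransGen M.Edge) := by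
  have : IsIrrefl V (Relation.TransGen M.Edge) := ⟨M.acyclic⟩
  have : IsTrans V (Relation.TransGen M.Edge) := ⟨fun _ _ _ => Relation.TransGen.trans⟩
  exact Finite.wellFounded_of_trans_of_irrefl _

def LocalDepG (g : (v : V) → ((p : V) → M.Dom p) → M.ExoDom v → M.Dom v) : Prop :=
  ∀ v a a' e, (∀ p, M.Edge p v → a p = a' p) → g v a e = g v a' e

noncomputable def solAux (g : (v : V) → ((p : V) → M.Dom p) → M.ExoDom v → M.Dom v)
    (ε : ∀ v, M.ExoDom v) : ∀ v, M.Dom v :=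
  (wfTG M).fix (fun v ih =>
    g v (fun p => if h : Relation.TransGen M.Edge p v then ih p h else M.dflt p) (ε v))

lemma solAux_solves {g} (hg : LocalDepG M g) (ε : ∀ v, M.ExoDom v) :
    M.Solves g ε (solAux M g ε) := by
  intro v
  rw [solAux, (wfTG M).fix_eq]
  refine hg v _ _ _ (fun p hp => ?_)
  rw [dif_pos (Relation.TransGen.single hp)]

lemma solves_unique {g} (hg : LocalDepG M g) {ε a a'}
    (ha : M.Solves g ε a) (ha' : M.Solves g ε a') : a = a' := by
  funext v
  induction v using (wfTG M).induction with
  | _ v ih =>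
    rw [ha v, ha' v]
    exact hg v _ _ _ (fun p hp => ih p (Relation.TransGen.single hp))

lemma sol_solves {g} (hg : LocalDepG M g) (ε : ∀ v, M.ExoDom v) :
    M.Solves g ε (M.sol g ε) := by
  rw [SCIM.sol, dif_pos ⟨_, solAux_solves M hg ε⟩]
  exact (Exists.choose_spec (⟨_, solAux_solves M hg ε⟩ : ∃ a, M.Solves g ε a))

/-- If `g` and `g'` agree off `X`, solutions agree on non-descendants of `X`. -/
lemma sol_eq_of_agree {g g'} (hg : LocalDepG M g) (hg' : LocalDepG M g')
    (X : V) (hagree : ∀ v, v ≠ X → g v = g' v) (ε : ∀ v, M.ExoDom v) :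
    ∀ v, ¬ Relation.ReflTransGen M.Edge X v → M.sol g ε v = M.sol g' ε v := by
  intro v
  induction v using (wfTG M).induction with
  | _ v ih =>
    intro hv
    have hvX : v ≠ X := fun h => hv (h ▸ Relation.ReflTransGen.refl)
    rw [sol_solves M hg ε v, sol_solves M hg' ε v, hagree v hvX]
    refine hg' v _ _ _ (fun p hp => ?_)
    refine ih p (Relation.TransGen.single hp) (fun hXp => hv ?_)
    exact hXp.tail hp

end SCIMAux

/-- if no utility node is a descendant of `X`, then the total
utility satisfies `U_{X_d}(ε) = U(ε)` for every exogenous setting `ε` and every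
decision value `d`. -/
theorem nested_utility_eq_of_no_util_descendant {V : Type} [Fintype V] [DecidableEq V]
    (M : SCIM V) (X : V)
    (hX : ∀ u ∈ M.Util, ¬ Relation.ReflTransGen M.Edge X u) :
    ∀ π, M.IsPolicy π → ∀ (d : M.Dom M.D) (ε : ∀ v, M.ExoDom v),
      M.TotalU (M.nestedSol π X d ε) = M.TotalU (M.sol (M.gpol π) ε) := by
  intro π hπ d ε
  have hg : SCIMAux.LocalDepG M (M.gpol π) := by
    intro v a a' e h
    unfold SCIM.gpol SCIM.replaceAt
    by_cases hv : v = M.D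
    · subst hv
      simp only [dif_pos rfl]
      exact hπ a a' e h
    · simp only [dif_neg hv]
      exact M.localDep v a a' e h
  set x : M.Dom X := M.response π M.D d ε X with hx
  have hg' : SCIMAux.LocalDepG M
      (M.doSet (M.gpol π) {X} (Function.update M.dflt X x)) := by
    intro v a a' e h
    unfold SCIM.doSet
    by_cases hv : v ∈ ({X} : Set V)
    · simp [hv]
    · simp only [if_neg hv]
      exact hg v a a' e h
  have hagree : ∀ v, v ≠ X →
      (M.doSet (M.gpol π) {X} (Function.update M.dflt X x)) v = M.gpol π v := by
    intro v hv
    unfold SCIM.doSet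
    rw [if_neg (by simpa using hv)]
  unfold SCIM.TotalU
  refine Finset.sum_congr rfl (fun u hu => ?_)
  have := SCIMAux.sol_eq_of_agree M hg' hg X hagree ε u (hX u hu)
  rw [SCIM.nestedSol, SCIM.response, ← hx, this]
end
end
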